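/- arXiv:1608.00319 — 2 statements merged into one kernel-verified Lean document; each statement's English description precedes it below -/
import Mathlib

section
/- Let P and Q be directed posets, P' ⊆ P, Q' ⊆ Q, and let κ ≥ λ ≥ μ be cardinals with κ regular. If (P',P) ≥_T (Q',Q) and P' has calibre (κ,λ,μ) in P, then Q' has calibre (κ,λ,μ) in Q. -/
open Cardinal Set

universe u v

/-- `C` is cofinal for `P'` in `P`: every element of `P'` lies below some element of `C`. -/
def IsCofinalFor' {P : Type u} [Preorder P] (P' C : Set P) : Prop :=
  ∀ p ∈ P', ∃ c ∈ C, p ≤ c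

/-- `φ : P → Q` is a relative Tukey quotient from `(P', P)` to `(Q', Q)`:
it maps every subset of `P` cofinal for `P'` to a subset of `Q` cofinal for `Q'`. -/
def IsRelTukeyQuotient {P : Type u} {Q : Type v} [Preorder P] [Preorder Q]
    (P' : Set P) (Q' : Set Q) (φ : P → Q) : Prop :=
  ∀ C : Set P, IsCofinalFor' P' C → IsCofinalFor' Q' (φ '' C)

/-- `(P', P) ≥_T (Q', Q)`: there exists a relative Tukey quotient. -/
def RelTukeyGE {P : Type u} {Q : Type v} [Preorder P] [Preorder Q]
    (P' : Set P) (Q' : Set Q) : Prop :=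
  ∃ φ : P → Q, IsRelTukeyQuotient P' Q' φ

/-- `P ≥_T Q`: there is a Tukey quotient from `P` to `Q`. -/
def TukeyGE (P : Type u) (Q : Type v) [Preorder P] [Preorder Q] : Prop :=
  RelTukeyGE (Set.univ : Set P) (Set.univ : Set Q)

/-- `A` is unbounded in `P`: it has no upper bound in `P`. -/
def UnboundedIn {P : Type u} [Preorder P] (A : Set P) : Prop :=
  ¬ ∃ b : P, ∀ a ∈ A, a ≤ b

/-- `P'` has calibre `(κ, l, m)` in `P`: every `κ`-sized subset `T` of `P'` has an
`l`-sized subset `T₀` all of whose `m`-sized subsets have an upper bound in `P`. -/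
def HasCalibre {P : Type u} [Preorder P] (P' : Set P) (κ l m : Cardinal.{u}) : Prop :=
  ∀ T ⊆ P', #↥T = κ → ∃ T₀ ⊆ T, #↥T₀ = l ∧
    ∀ T₁ ⊆ T₀, #↥T₁ = m → ∃ b : P, ∀ x ∈ T₁, x ≤ b

/-!
A relative Tukey quotient `φ` assigns to each `q ∈ Q'` some `g q ∈ P'` with `q ≤ φ x` whenever
`g q ≤ x`. Given a `κ`-sized `T ⊆ Q'`, either `g` has a `κ`-sized image on `T`, and then the calibre
of `P'` applied to that image pulls back along `g` and pushes forward along `φ`; or, `κ` being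
regular, `g` is constant, say `p`, on a `κ`-sized subset of `T`, which is then bounded by `φ p`.
-/

theorem IsRelTukeyQuotient.exists_forall_le_imp_le {P : Type u} {Q : Type v} [Preorder P]
    [Preorder Q] {P' : Set P} {Q' : Set Q} {φ : P → Q} (hφ : IsRelTukeyQuotient P' Q' φ)
    {q : Q} (hq : q ∈ Q') : ∃ p ∈ P', ∀ x, p ≤ x → q ≤ φ x := by
  by_contra! h
  -- otherwise the points `x` with `q ≰ φ x` are cofinal for `P'`, yet their image misses `q`
  have hcof : IsCofinalFor' P' {x | ¬q ≤ φ x} := fun p hp =>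
    let ⟨x, hpx, hqx⟩ := h p hp
    ⟨x, hqx, hpx⟩
  obtain ⟨_, ⟨x, hqx, rfl⟩, hle⟩ := hφ _ hcof q hq
  exact hqx hle

def HasCalibreSubset {P : Type u} [Preorder P] (T : Set P) (l m : Cardinal.{u}) : Prop :=
  ∃ T₀ ⊆ T, #T₀ = l ∧ ∀ T₁ ⊆ T₀, #T₁ = m → BddAbove T₁

section

variable {P Q : Type u} [Preorder P] [Preorder Q] {P' : Set P} {κ l m : Cardinal.{u}}

theorem hasCalibre_iff :
    HasCalibre P' κ l m ↔ ∀ T ⊆ P', #T = κ → HasCalibreSubset T l m :=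
  Iff.rfl

theorem HasCalibreSubset.mono {T T' : Set P} (h : HasCalibreSubset T l m) (hT : T ⊆ T') :
    HasCalibreSubset T' l m :=
  let ⟨T₀, hT₀, hT₀l, hbdd⟩ := h
  ⟨T₀, hT₀.trans hT, hT₀l, hbdd⟩

theorem BddAbove.hasCalibreSubset {T : Set P} (hT : BddAbove T) (hl : l ≤ #T) :
    HasCalibreSubset T l m := by
  obtain ⟨T₀, hT₀, hT₀l⟩ := le_mk_iff_exists_subset.mp hl
  exact ⟨T₀, hT₀, hT₀l, fun T₁ hT₁ _ => hT.mono (hT₁.trans hT₀)⟩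

theorem HasCalibreSubset.of_injOn_image {T : Set Q} {φ : P → Q} {g : Q → P}
    (hinj : InjOn g T) (hg : ∀ q ∈ T, ∀ x, g q ≤ x → q ≤ φ x)
    (h : HasCalibreSubset (g '' T) l m) : HasCalibreSubset T l m := by
  obtain ⟨S₀, hS₀, hS₀l, hbdd⟩ := h
  have hT₀ : g '' (T ∩ g ⁻¹' S₀) = S₀ := by rw [image_inter_preimage, inter_eq_right.mpr hS₀]
  refine ⟨T ∩ g ⁻¹' S₀, inter_subset_left, ?_, fun T₁ hT₁ hT₁m => ?_⟩
  · rw [← mk_image_eq_of_injOn g _ (hinj.mono inter_subset_left), hT₀, hS₀l]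
  · have hgT₁ : #(g '' T₁) = m := by
      rw [mk_image_eq_of_injOn g _ (hinj.mono (hT₁.trans inter_subset_left)), hT₁m]
    obtain ⟨b, hb⟩ := hbdd (g '' T₁) (hT₀ ▸ image_mono hT₁) hgT₁
    exact ⟨φ b, fun q hq => hg q (hT₁ hq).1 b (hb (mem_image_of_mem g hq))⟩

theorem HasCalibre.hasCalibreSubset_of_forall_le_imp_le (hcal : HasCalibre P' κ l m)
    (hreg : κ.IsRegular) (hlκ : l ≤ κ) {T : Set Q} (hTκ : #T = κ) {φ : P → Q} {g : Q → P}
    (hgP : MapsTo g T P') (hg : ∀ q ∈ T, ∀ x, g q ≤ x → q ≤ φ x) :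
    HasCalibreSubset T l m := by
  rcases (mk_image_le (f := g) (s := T)).trans_eq hTκ |>.eq_or_lt with himage | himage
  · obtain ⟨T', hT'T, hbij⟩ := exists_subset_bijOn T g
    have hcalT' : HasCalibreSubset (g '' T') l m := by
      rw [hbij.image_eq]
      exact hcal _ hgP.image_subset himage
    exact (hcalT'.of_injOn_image hbij.injOn fun q hq => hg q (hT'T hq)).mono hT'T
  · obtain ⟨⟨p, _⟩, t, htT, hκt, hgt⟩ := infinite_pigeonhole_set
      (mapsTo_image g T).restrict κ hTκ.ge hreg.aleph0_le (hreg.cof_ord.symm ▸ himage)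
    have hbdd : BddAbove t :=
      ⟨φ p, fun q hq => hg q (htT hq) p (congrArg Subtype.val (hgt hq)).le⟩
    exact (hbdd.hasCalibreSubset (hlκ.trans hκt)).mono htT

end

theorem statement4_general {P Q : Type u} [PartialOrder P] [PartialOrder Q]
    (P' : Set P) (Q' : Set Q) (κ l m : Cardinal.{u})
    (hlκ : l ≤ κ) (hreg : κ.IsRegular)
    (hT : RelTukeyGE P' Q') (hcal : HasCalibre P' κ l m) :
    HasCalibre Q' κ l m := by
  obtain ⟨φ, hφ⟩ := hT
  refine hasCalibre_iff.mpr fun T hTQ hTκ => ?_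
  obtain ⟨q₀, hq₀⟩ : T.Nonempty := by
    rw [← nonempty_coe_sort, ← mk_ne_zero_iff, hTκ]
    exact hreg.pos.ne'
  -- `choose!` needs a default value in `P`
  have : Nonempty P := ⟨(hφ.exists_forall_le_imp_le (hTQ hq₀)).choose⟩
  choose! g hgP hg using fun q (hq : q ∈ Q') => hφ.exists_forall_le_imp_le hq
  exact hcal.hasCalibreSubset_of_forall_le_imp_le hreg hlκ hTκ (fun q hq => hgP q (hTQ hq))
    fun q hq => hg q (hTQ hq)

/-- If `(P', P) ≥_T (Q', Q)`, `κ ≥ l ≥ m` with `κ` regular, and `P'` has calibre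
`(κ, l, m)` in `P`, then `Q'` has calibre `(κ, l, m)` in `Q`. -/
theorem statement4 {P Q : Type u} [PartialOrder P] [PartialOrder Q]
    (hPdir : ∀ a b : P, ∃ c, a ≤ c ∧ b ≤ c) (hQdir : ∀ a b : Q, ∃ c, a ≤ c ∧ b ≤ c)
    (P' : Set P) (Q' : Set Q) (κ l m : Cardinal.{u})
    (hlκ : l ≤ κ) (hml : m ≤ l) (hreg : κ.IsRegular)
    (hT : RelTukeyGE P' Q') (hcal : HasCalibre P' κ l m) :
    HasCalibre Q' κ l m :=
  statement4_general P' Q' κ l m hlκ hreg hT hcal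
end

section
/- Let P be a directed poset, P' ⊆ P, and κ a regular cardinal. Then P' fails to have calibre κ in P if and only if (P',P) ≥_T κ, where κ is viewed as a poset with its usual order. -/
/-
If `T ⊆ P'` has size `κ` and every `p` bounds fewer than `κ` points of `T`, enumerate `T` along
`κ` and send `p` to an upper bound of the indices of the points below it; regularity makes this
bound exist, and it witnesses a relative Tukey quotient onto `κ`. Conversely, a relative Tukey
quotient `φ` assigns to each `β < κ` some `f β ∈ P'` with `β ≤ φ q` for all `q ≥ f β`; then each
`p` lies above `f β` only for `β ≤ φ p`, so the range of `f` is a set of size `κ` (by the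
pigeonhole principle for regular `κ`) refuting calibre `κ`.
-/

open Cardinal Set

universe u v

theorem Order.exists_forall_lt_of_mk_lt_cof {α : Type u} [LinearOrder α] {s : Set α}
    (hs : #s < Order.cof α) : ∃ b, ∀ a ∈ s, a < b := by
  by_contra! h
  exact (Order.cof_le h).not_gt hs

theorem Cardinal.mk_Iic_toType_ord_lt {c : Cardinal.{u}} (hc : ℵ₀ ≤ c) (b : c.ord.ToType) :
    #(Iic b) < c := by
  have hIio : #(Iio b) < c := by simpa using mk_Iio_lt b
  calc #(Iic b) = #(insert b (Iio b) : Set _) := by rw [Iio_insert]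
    _ ≤ #(Iio b) + 1 := mk_insert_le
    _ < c := add_lt_of_lt hc hIio (one_lt_aleph0.trans_le hc)

theorem Cardinal.IsRegular.bddAbove_iff_mk_lt {κ : Cardinal.{u}} (hκ : κ.IsRegular)
    {s : Set κ.ord.ToType} : BddAbove s ↔ #s < κ := by
  constructor
  · rintro ⟨b, hb⟩
    exact (mk_le_mk_of_subset hb).trans_lt (mk_Iic_toType_ord_lt hκ.aleph0_le b)
  · intro hs
    obtain ⟨b, hb⟩ := Order.exists_forall_lt_of_mk_lt_cof
      (by rwa [Ordinal.cof_toType, hκ.cof_ord] : #s < Order.cof κ.ord.ToType)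
    exact ⟨b, fun a ha => (hb a ha).le⟩

section Calibre

variable {P : Type u} [Preorder P] {P' : Set P} {κ : Cardinal.{u}}

theorem not_hasCalibre_iff :
    ¬ HasCalibre P' κ κ κ ↔ ∃ T ⊆ P', #T = κ ∧ ∀ p, #({x ∈ T | x ≤ p} : Set P) < κ := by
  constructor
  · intro h
    simp only [HasCalibre, not_forall, not_exists, not_and] at h
    obtain ⟨T, hTP', hT, hnone⟩ := h
    refine ⟨T, hTP', hT, fun p => lt_of_le_of_ne ?_ fun hκ => ?_⟩
    · exact hT ▸ mk_le_mk_of_subset fun x hx => hx.1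
    · obtain ⟨T₁, hT₁, hT₁κ, hunb⟩ := hnone _ (fun x hx => hx.1) hκ
      obtain ⟨x, hx, hxp⟩ := hunb p
      exact hxp (hT₁ hx).2
  · rintro ⟨T, hTP', hT, hsmall⟩ hcal
    obtain ⟨T₀, hT₀T, hT₀, hbdd⟩ := hcal T hTP' hT
    obtain ⟨b, hb⟩ := hbdd T₀ subset_rfl hT₀
    have : #T₀ ≤ #({x ∈ T | x ≤ b} : Set P) := mk_le_mk_of_subset fun x hx => ⟨hT₀T hx, hb x hx⟩
    exact (hT₀ ▸ this).not_gt (hsmall b)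

theorem mk_range_eq_and_forall_mk_lt {ι : Type u} (hκ : κ.IsRegular) (hι : #ι = κ)
    {f : ι → P} (hsmall : ∀ p, #{i | f i ≤ p} < κ) :
    #(range f) = κ ∧ ∀ p, #({x ∈ range f | x ≤ p} : Set P) < κ := by
  refine ⟨le_antisymm (hι ▸ mk_range_le) (not_lt.1 fun hlt => ?_), fun p => ?_⟩
  · obtain ⟨t, ht⟩ := infinite_pigeonhole_card (rangeFactorization f) κ hι.ge hκ.aleph0_le
      (by rwa [hκ.cof_ord])
    have hfiber : rangeFactorization f ⁻¹' {t} ⊆ {i | f i ≤ t} := by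
      intro i (hi : rangeFactorization f i = t)
      exact (congrArg Subtype.val hi).le
    exact ht.not_gt ((mk_le_mk_of_subset hfiber).trans_lt (hsmall t))
  · have : ({x ∈ range f | x ≤ p} : Set P) ⊆ f '' {i | f i ≤ p} := by
      rintro _ ⟨⟨i, rfl⟩, hi⟩
      exact ⟨i, hi, rfl⟩
    exact (mk_le_mk_of_subset this).trans_lt (mk_image_le.trans_lt (hsmall p))

end Calibre

section Tukey

variable {P : Type u} [Preorder P] {P' : Set P} {κ : Cardinal.{u}}

theorem IsRelTukeyQuotient.exists_forall_le {Q : Type v} [Preorder Q] {Q' : Set Q} {φ : P → Q}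
    (hφ : IsRelTukeyQuotient P' Q' φ) {y : Q} (hy : y ∈ Q') :
    ∃ p ∈ P', ∀ q, p ≤ q → y ≤ φ q := by
  by_contra! h
  obtain ⟨_, ⟨c, hc, rfl⟩, hyc⟩ := hφ {q | ¬ y ≤ φ q}
    (fun p hp => (h p hp).imp fun _ ⟨hpq, hq⟩ => ⟨hq, hpq⟩) y hy
  exact hc hyc

theorem relTukeyGE_ord_toType_of_forall_mk_lt (hκ : κ.IsRegular) {f : κ.ord.ToType → P}
    (hf : ∀ β, f β ∈ P') (hsmall : ∀ p, #{β | f β ≤ p} < κ) :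
    RelTukeyGE P' (univ : Set κ.ord.ToType) := by
  choose φ hφ using fun p => hκ.bddAbove_iff_mk_lt.2 (hsmall p)
  refine ⟨φ, fun C hC β _ => ?_⟩
  obtain ⟨c, hc, hβc⟩ := hC (f β) (hf β)
  exact ⟨φ c, mem_image_of_mem φ hc, hφ c hβc⟩

theorem RelTukeyGE.exists_forall_mk_lt (hκ : κ.IsRegular)
    (h : RelTukeyGE P' (univ : Set κ.ord.ToType)) :
    ∃ f : κ.ord.ToType → P, (∀ β, f β ∈ P') ∧ ∀ p, #{β | f β ≤ p} < κ := by
  obtain ⟨φ, hφ⟩ := h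
  choose f hfP' hf using fun β => hφ.exists_forall_le (mem_univ β)
  exact ⟨f, hfP', fun p => hκ.bddAbove_iff_mk_lt.1 ⟨φ p, fun β hβ => hf β p hβ⟩⟩

end Tukey

theorem statement5_general {P : Type u} [PartialOrder P]
    (P' : Set P) (κ : Cardinal.{u}) (hreg : κ.IsRegular) :
    ¬ HasCalibre P' κ κ κ ↔ RelTukeyGE P' (Set.univ : Set κ.ord.ToType) := by
  rw [not_hasCalibre_iff]
  constructor
  · rintro ⟨T, hTP', hT, hsmall⟩
    obtain ⟨e⟩ : Nonempty (κ.ord.ToType ≃ T) := Cardinal.eq.1 (by rw [mk_ord_toType, hT])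
    have he : Function.Injective (Subtype.val ∘ e) := Subtype.val_injective.comp e.injective
    refine relTukeyGE_ord_toType_of_forall_mk_lt hreg (fun β => hTP' (e β).2) fun p => ?_
    calc #{β | (e β : P) ≤ p} ≤ #((Subtype.val ∘ e) ⁻¹' {x ∈ T | x ≤ p}) :=
          mk_le_mk_of_subset fun β hβ => ⟨(e β).2, hβ⟩
      _ ≤ #({x ∈ T | x ≤ p} : Set P) := mk_preimage_of_injective _ _ he
      _ < κ := hsmall p
  · intro h
    obtain ⟨f, hfP', hsmall⟩ := h.exists_forall_mk_lt hreg
    exact ⟨range f, range_subset_iff.2 hfP', mk_range_eq_and_forall_mk_lt hreg (mk_ord_toType κ) hsmall⟩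

/-- For a directed poset `P`, `P' ⊆ P` and a regular cardinal `κ`:
`P'` fails to have calibre `κ` in `P` iff `(P', P) ≥_T κ`,
where `κ` is viewed as a poset with its usual (ordinal) order. -/
theorem statement5 {P : Type u} [PartialOrder P]
    (hPdir : ∀ a b : P, ∃ c, a ≤ c ∧ b ≤ c)
    (P' : Set P) (κ : Cardinal.{u}) (hreg : κ.IsRegular) :
    ¬ HasCalibre P' κ κ κ ↔ RelTukeyGE P' (Set.univ : Set κ.ord.ToType) :=
  statement5_general P' κ hreg
end
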